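/- arXiv:1604.04162 — 3 statements merged into one kernel-verified Lean document; each statement's English description precedes it below -/
import Mathlib

section
/- Let G be a group with a commensurated subgroup Λ. Then for every g, h ∈ G there exists a finite index subgroup Λ' of Λ such that [[g, λ], h] ∈ Λ for every λ ∈ Λ'. -/
def conjS {G : Type*} [Group G] (g : G) (H : Subgroup G) : Subgroup G :=
  H.map (MulAut.conj g).toMonoidHom

/-- `Λ` is commensurated: `gΛg⁻¹ ∩ Λ` has finite index in `Λ` for all `g`. -/
def Commensurated {G : Type*} [Group G] (H : Subgroup G) : Prop :=
  ∀ g : G, (conjS g H ⊓ H).relIndex H ≠ 0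

/-
Take `Λ'` to be the `l ∈ Λ` with `g l g⁻¹`, `h l h⁻¹` and `(hg) l (hg)⁻¹` in `Λ`, an intersection
of three finite index subgroups of `Λ`. It works because
`[[g, l], h] = (g l g⁻¹) l⁻¹ (h l h⁻¹) ((hg) l (hg)⁻¹)⁻¹`.
-/

open scoped commutatorElement

lemma mem_conjS_inv_iff {G : Type*} [Group G] {g x : G} {H : Subgroup G} :
    x ∈ conjS g⁻¹ H ↔ g * x * g⁻¹ ∈ H := by
  constructor
  · rintro ⟨y, hy, rfl⟩
    simpa [mul_assoc] using hy
  · exact fun hx ↦ ⟨_, hx, by simp [mul_assoc]⟩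

lemma commutatorElement_commutatorElement_eq {G : Type*} [Group G] (g l h : G) :
    ⁅⁅g, l⁆, h⁆ = (g * l * g⁻¹) * l⁻¹ * (h * l * h⁻¹) * ((h * g) * l * (h * g)⁻¹)⁻¹ := by
  simp only [commutatorElement_def]
  group

theorem stmt_7 {G : Type*} [Group G] (Λ : Subgroup G) (hΛ : Commensurated Λ)
    (g h : G) :
    ∃ Λ' : Subgroup G, Λ' ≤ Λ ∧ Λ'.relIndex Λ ≠ 0 ∧
      ∀ l ∈ Λ', ⁅⁅g, l⁆, h⁆ ∈ Λ := by
  refine ⟨(conjS g⁻¹ Λ ⊓ Λ) ⊓ ((conjS h⁻¹ Λ ⊓ Λ) ⊓ (conjS (h * g)⁻¹ Λ ⊓ Λ)),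
    inf_le_left.trans inf_le_right,
    Subgroup.relIndex_inf_ne_zero (hΛ g⁻¹)
      (Subgroup.relIndex_inf_ne_zero (hΛ h⁻¹) (hΛ (h * g)⁻¹)), ?_⟩
  rintro l ⟨⟨hg, hl⟩, ⟨hh, -⟩, ⟨hhg, -⟩⟩
  rw [commutatorElement_commutatorElement_eq]
  exact mul_mem (mul_mem (mul_mem (mem_conjS_inv_iff.mp hg) (inv_mem hl))
    (mem_conjS_inv_iff.mp hh)) (inv_mem (mem_conjS_inv_iff.mp hhg))
end

section
/- Let G be a t.d.l.c. group in which every proper open commensurated subgroup is compact, and let φ : G → H be a continuous group homomorphism into a t.d.l.c. group H. Then the image of φ is closed in H. -/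
/-!
If every compact open subgroup of `H` contains `φ(G)`, then `φ(G)` is trivial, because by van
Dantzig's theorem these subgroups intersect in `1`. Otherwise some compact open subgroup `W`
misses part of `φ(G)`. Being compact open, `W` is commensurated, so `φ⁻¹(W)` is a proper open
commensurated subgroup of `G`, hence compact, and `φ(G) ∩ W = φ(φ⁻¹(W))` is compact. A subgroup
whose intersection with an open subgroup is closed is itself closed.
-/

open Set Filter Pointwise

section Commensurated

variable {G H : Type*} [Group G] [Group H]

lemma mem_conjS {g x : G} {S : Subgroup G} : x ∈ conjS g S ↔ g⁻¹ * x * g ∈ S := by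
  constructor
  · rintro ⟨y, hy, rfl⟩
    simpa [MulAut.conj_apply, mul_assoc] using hy
  · intro h
    refine ⟨g⁻¹ * x * g, h, ?_⟩
    simp [MulAut.conj_apply, mul_assoc]

lemma conjS_comap (φ : G →* H) (g : G) (W : Subgroup H) :
    conjS g (W.comap φ) = (conjS (φ g) W).comap φ := by
  ext x
  simp only [mem_conjS, Subgroup.mem_comap, map_mul, map_inv]

lemma Commensurated.comap {W : Subgroup H} (hW : Commensurated W) (φ : G →* H) :
    Commensurated (W.comap φ) := fun g ↦ by
  rw [conjS_comap, ← Subgroup.comap_inf]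
  exact Subgroup.relIndex_comap_ne_zero φ (hW (φ g))

end Commensurated

section TopologicalGroup

variable {G : Type*} [Group G] [TopologicalSpace G] [IsTopologicalGroup G]

lemma isOpen_conjS {W : Subgroup G} (hW : IsOpen (W : Set G)) (g : G) :
    IsOpen (conjS g W : Set G) := by
  have : (conjS g W : Set G) = (fun x ↦ g⁻¹ * x * g) ⁻¹' W := by
    ext x
    exact mem_conjS
  rw [this]
  exact hW.preimage (by fun_prop)

lemma Subgroup.relIndex_ne_zero_of_isOpen_of_isCompact {A K : Subgroup G}
    (hA : IsOpen (A : Set G)) (hK : IsCompact (K : Set G)) : A.relIndex K ≠ 0 := by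
  have : CompactSpace K := isCompact_iff_compactSpace.mp hK
  have : Finite (K ⧸ A.subgroupOf K) := quotient_finite_of_isOpen _ (subgroupOf_isOpen K A hA)
  exact index_ne_zero_of_finite

lemma commensurated_of_isOpen_of_isCompact {W : Subgroup G} (hWo : IsOpen (W : Set G))
    (hWc : IsCompact (W : Set G)) : Commensurated W := fun g ↦ by
  rw [Subgroup.inf_relIndex_right]
  exact Subgroup.relIndex_ne_zero_of_isOpen_of_isCompact (isOpen_conjS hWo g) hWc

lemma Subgroup.isClosed_of_isClosed_inter_isOpen {S W : Subgroup G}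
    (hW : IsOpen (W : Set G)) (hSW : IsClosed ((S : Set G) ∩ W)) : IsClosed (S : Set G) := by
  refine isClosed_of_closure_subset fun x hx ↦ ?_
  obtain ⟨s, hsx, hs⟩ : ∃ s ∈ x • (W : Set G), s ∈ S :=
    mem_closure_iff_nhds.mp hx _ ((hW.smul x).mem_nhds ⟨1, W.one_mem, mul_one x⟩)
  have hclosure : s⁻¹ * x ∈ S.topologicalClosure :=
    mul_mem (S.topologicalClosure.inv_mem (S.le_topologicalClosure hs)) hx
  have hW' : s⁻¹ * x ∈ W := by
    obtain ⟨w, hw, rfl⟩ := hsx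
    simpa using W.inv_mem hw
  have : s⁻¹ * x ∈ (S : Set G) ∩ W := by
    have := hW.inter_closure ⟨hW', hclosure⟩
    rwa [inter_comm, hSW.closure_eq] at this
  simpa using S.mul_mem hs this.1

end TopologicalGroup

section TotallyDisconnected

lemma exists_isCompact_isOpen_subset {X : Type*} [TopologicalSpace X] [LocallyCompactSpace X]
    [T2Space X] [TotallyDisconnectedSpace X] {x : X} {U : Set X} (hU : IsOpen U) (hx : x ∈ U) :
    ∃ W, IsCompact W ∧ IsOpen W ∧ x ∈ W ∧ W ⊆ U := by
  obtain ⟨K, hK, hxK, hKU⟩ := exists_compact_subset hU hx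
  obtain ⟨W, hW, hxW, hWK⟩ :=
    loc_compact_Haus_tot_disc_of_zero_dim.exists_subset_of_mem_open hxK isOpen_interior
  have hWK' : W ⊆ K := hWK.trans interior_subset
  exact ⟨W, hK.of_isClosed_subset hW.isClosed hWK', hW.isOpen, hxW, hWK'.trans hKU⟩

variable {G : Type*} [Group G] [TopologicalSpace G] [IsTopologicalGroup G]
  [LocallyCompactSpace G] [T2Space G] [TotallyDisconnectedSpace G]

/-- Van Dantzig's theorem. The subgroup is the stabiliser of a compact open neighbourhood `W`
of `1` under left translation: it is open since `V * W ⊆ W` for some neighbourhood `V` of `1`,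
and it lies in `W` because `1 ∈ W`. -/
theorem exists_isCompact_isOpen_subgroup_subset {U : Set G} (hU : IsOpen U) (h1 : (1 : G) ∈ U) :
    ∃ S : Subgroup G, IsOpen (S : Set G) ∧ IsCompact (S : Set G) ∧ (S : Set G) ⊆ U := by
  obtain ⟨W, hWc, hWo, h1W, hWU⟩ := exists_isCompact_isOpen_subset hU h1
  obtain ⟨V, hV, hVW⟩ := compact_open_separated_mul_left hWc hWo subset_rfl
  let S := MulAction.stabilizer G W
  have hVS : V ∩ V⁻¹ ⊆ S := fun g ⟨hg, hg'⟩ ↦ by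
    refine ((Set.smul_set_subset_mul hg).trans hVW).antisymm ?_
    rw [Set.subset_smul_set_iff]
    exact (Set.smul_set_subset_mul (Set.mem_inv.mp hg')).trans hVW
  have hSW : (S : Set G) ⊆ W := fun g hg ↦ by
    rw [← (hg : g • W = W)]
    exact ⟨1, h1W, mul_one g⟩
  have hSo : IsOpen (S : Set G) :=
    S.isOpen_of_mem_nhds (g := 1) (mem_of_superset (inter_mem hV (inv_mem_nhds_one G hV)) hVS)
  exact ⟨S, hSo, hWc.of_isClosed_subset (S.isClosed_of_isOpen hSo) hSW, hSW.trans hWU⟩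

lemma Subgroup.eq_bot_of_forall_le_of_isOpen_of_isCompact {S : Subgroup G}
    (hS : ∀ W : Subgroup G, IsOpen (W : Set G) → IsCompact (W : Set G) → S ≤ W) : S = ⊥ := by
  refine (Subgroup.eq_bot_iff_forall S).mpr fun x hx ↦ ?_
  by_contra hx1
  obtain ⟨W, hWo, hWc, hWx⟩ :=
    exists_isCompact_isOpen_subgroup_subset isClosed_singleton.isOpen_compl (Ne.symm hx1)
  exact hWx (hS W hWo hWc hx) rfl

end TotallyDisconnected

theorem stmt_9_general {G H : Type*}
    [Group G] [TopologicalSpace G]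
    [Group H] [TopologicalSpace H] [IsTopologicalGroup H]
    [LocallyCompactSpace H] [T2Space H] [TotallyDisconnectedSpace H]
    (hyp : ∀ U : Subgroup G, IsOpen (U : Set G) → Commensurated U → U ≠ ⊤ →
      IsCompact (U : Set G))
    (φ : G →* H) (hφ : Continuous φ) :
    IsClosed (Set.range φ) := by
  rw [← MonoidHom.coe_range]
  by_cases hW : ∃ W : Subgroup H, IsOpen (W : Set H) ∧ IsCompact (W : Set H) ∧ ¬ φ.range ≤ W
  · obtain ⟨W, hWo, hWc, hφW⟩ := hW
    have hU : IsCompact (W.comap φ : Set G) :=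
      hyp _ (hWo.preimage hφ) ((commensurated_of_isOpen_of_isCompact hWo hWc).comap φ)
        fun h ↦ hφW (by rw [φ.range_eq_map, Subgroup.map_le_iff_le_comap, h])
    refine Subgroup.isClosed_of_isClosed_inter_isOpen hWo ?_
    rw [← Subgroup.coe_inf, ← Subgroup.map_comap_eq, Subgroup.coe_map]
    exact (hU.image hφ).isClosed
  · push Not at hW
    rw [Subgroup.eq_bot_of_forall_le_of_isOpen_of_isCompact hW, Subgroup.coe_bot]
    exact isClosed_singleton

theorem stmt_9 {G H : Type*}
    [Group G] [TopologicalSpace G] [IsTopologicalGroup G]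
    [LocallyCompactSpace G] [T2Space G] [TotallyDisconnectedSpace G]
    [Group H] [TopologicalSpace H] [IsTopologicalGroup H]
    [LocallyCompactSpace H] [T2Space H] [TotallyDisconnectedSpace H]
    (hyp : ∀ U : Subgroup G, IsOpen (U : Set G) → Commensurated U → U ≠ ⊤ →
      IsCompact (U : Set G))
    (φ : G →* H) (hφ : Continuous φ) :
    IsClosed (Set.range φ) :=
  stmt_9_general hyp φ hφ
end

section
/- Let G be a simple group and Λ a commensurated subgroup of G. If Λ contains a subgroup L that has no proper finite index subgroup, then Λ contains the normal closure of L in G; in particular, if L is nontrivial then Λ = G. -/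
/-! A group `L` without proper finite-index subgroups lies in every subgroup of finite index
relative to it. Commensurability of `Λ` makes each `gΛg⁻¹ ∩ Λ` such a subgroup for `L ≤ Λ`, so `L`
lies in the normal core `⋂_g gΛg⁻¹` of `Λ`, a normal subgroup contained in `Λ`. In a simple
group that core is trivial or everything, and it contains `L`. -/

open Subgroup

theorem Subgroup.le_of_relIndex_ne_zero {G : Type*} [Group G] {H L : Subgroup G}
    (hL : ∀ K : Subgroup L, K.index ≠ 0 → K = ⊤) (h : H.relIndex L ≠ 0) : L ≤ H :=
  subgroupOf_eq_top.mp (hL _ h)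

theorem Subgroup.le_normalCore_of_forall_le_conjS {G : Type*} [Group G] {H L : Subgroup G}
    (h : ∀ g : G, L ≤ conjS g H) : L ≤ H.normalCore := by
  rw [normalCore_eq_iInf_map_conj]
  exact le_iInf h

theorem Commensurated.le_conjS {G : Type*} [Group G] {Λ L : Subgroup G} (hΛ : Commensurated Λ)
    (hLΛ : L ≤ Λ) (hL : ∀ K : Subgroup L, K.index ≠ 0 → K = ⊤) (g : G) : L ≤ conjS g Λ :=
  (le_of_relIndex_ne_zero hL fun h => hΛ g (relIndex_eq_zero_of_le_right hLΛ h)).trans inf_le_left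

theorem Commensurated.le_normalCore {G : Type*} [Group G] {Λ L : Subgroup G}
    (hΛ : Commensurated Λ) (hLΛ : L ≤ Λ) (hL : ∀ K : Subgroup L, K.index ≠ 0 → K = ⊤) :
    L ≤ Λ.normalCore :=
  le_normalCore_of_forall_le_conjS (hΛ.le_conjS hLΛ hL)

theorem stmt_14 {G : Type*} [Group G] [IsSimpleGroup G]
    (Λ L : Subgroup G) (hΛ : Commensurated Λ) (hLΛ : L ≤ Λ)
    (hL : ∀ K : Subgroup L, K.index ≠ 0 → K = ⊤) :
    Subgroup.normalClosure (L : Set G) ≤ Λ ∧ (L ≠ ⊥ → Λ = ⊤) := by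
  have hcore : L ≤ Λ.normalCore := hΛ.le_normalCore hLΛ hL
  refine ⟨(normalClosure_le_normal hcore).trans Λ.normalCore_le, fun hL_ne => ?_⟩
  obtain hbot | htop := IsSimpleGroup.eq_bot_or_eq_top_of_normal Λ.normalCore Λ.normalCore_normal
  · exact absurd (le_bot_iff.mp (hbot ▸ hcore)) hL_ne
  · exact top_le_iff.mp (htop ▸ Λ.normalCore_le)
end
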